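/- Let (X, Y, π) be an irreducible finite-to-one factor triple and y ∈ Y right transitive. Then any two preimages x, x̄ of y are either mutually separated (x_i ≠ x̄_i for all i ∈ ℤ) or right asymptotic (agree on [N, ∞) for some N). -/
import Mathlib


open Set

universe u v uc

variable {A : Type u} {B : Type v}

/-- The shift by `n` on points of the full shift `ℤ → A`. -/
def shiftMap (n : ℤ) (x : ℤ → A) : ℤ → A := fun i => x (i + n)

/-- A subshift: a closed, shift-invariant subset of the full shift. -/
def IsSubshift [TopologicalSpace A] (X : Set (ℤ → A)) : Prop :=
  IsClosed X ∧ ∀ n : ℤ, ∀ x ∈ X, shiftMap n x ∈ X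

/-- The block `u` (of length `p`) occurs in `X`. -/
def OccursIn {p : ℕ} (u : Fin p → A) (X : Set (ℤ → A)) : Prop :=
  ∃ x ∈ X, ∃ i : ℤ, ∀ j : Fin p, x (i + (j.1 : ℤ)) = u j

/-- A shift of finite type: a subshift determined by a set of allowed `k`-blocks. -/
def IsSFT [TopologicalSpace A] (X : Set (ℤ → A)) : Prop :=
  IsSubshift X ∧ ∃ (k : ℕ) (P : (Fin k → A) → Prop),
    X = {x | ∀ i : ℤ, P fun j => x (i + (j.1 : ℤ))}

/-- A one-step shift of finite type: determined by allowed 2-blocks. -/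
def IsOneStep [TopologicalSpace A] (X : Set (ℤ → A)) : Prop :=
  IsSubshift X ∧ ∃ T : A → A → Prop, X = {x | ∀ i : ℤ, T (x i) (x (i + 1))}

/-- Irreducibility: any two blocks of `X` can be seen in a single point of `X`,
the second occurring after the first. -/
def IrreducibleSubshift [TopologicalSpace A] (X : Set (ℤ → A)) : Prop :=
  ∀ (p q : ℕ) (u : Fin p → A) (w : Fin q → A),
    OccursIn u X → OccursIn w X →
      ∃ x ∈ X, ∃ i k : ℤ, i + (p : ℤ) ≤ k ∧
        (∀ j : Fin p, x (i + (j.1 : ℤ)) = u j) ∧ ∀ j : Fin q, x (k + (j.1 : ℤ)) = w j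

/-- A sliding block code: given by a local rule on a finite window. -/
def IsSlidingBlockCode (π : (ℤ → A) → ℤ → B) : Prop :=
  ∃ (r : ℕ) (Φ : (Fin (2 * r + 1) → A) → B),
    ∀ x i, π x i = Φ fun j => x (i - (r : ℤ) + (j.1 : ℤ))

/-- A one-block code. -/
def IsOneBlock (π : (ℤ → A) → ℤ → B) : Prop :=
  ∃ Φ : A → B, ∀ x i, π x i = Φ (x i)

/-- `Φ` is a one-block local rule for `π`. -/
def OneBlockRule (π : (ℤ → A) → ℤ → B) (Φ : A → B) : Prop :=
  ∀ x i, π x i = Φ (x i)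

/-- A factor code from `X` onto `Y`. -/
def IsFactorCode (X : Set (ℤ → A)) (Y : Set (ℤ → B)) (π : (ℤ → A) → ℤ → B) : Prop :=
  IsSlidingBlockCode π ∧ (∀ x ∈ X, π x ∈ Y) ∧ ∀ y ∈ Y, ∃ x ∈ X, π x = y

/-- A factor triple: a factor code from an SFT `X` onto the subshift `Y`. -/
def FactorTriple [TopologicalSpace A] [TopologicalSpace B]
    (X : Set (ℤ → A)) (Y : Set (ℤ → B)) (π : (ℤ → A) → ℤ → B) : Prop :=
  IsSFT X ∧ IsSubshift Y ∧ IsFactorCode X Y π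

/-- Transition `x → x'`: for each `n` there is `z` in the fiber agreeing with `x`
on `(-∞, n]` and with `x'` on `[i, ∞)` for some `i ≥ n`. -/
def TransitionTo (X : Set (ℤ → A)) (π : (ℤ → A) → ℤ → B) (x x' : ℤ → A) : Prop :=
  ∀ n : ℤ, ∃ z ∈ X, π z = π x ∧ (∀ m ≤ n, z m = x m) ∧
    ∃ i : ℤ, n ≤ i ∧ ∀ m : ℤ, i ≤ m → z m = x' m

/-- `x ~ x'`: transitions in both directions. -/
def TransEquiv (X : Set (ℤ → A)) (π : (ℤ → A) → ℤ → B) (x x' : ℤ → A) : Prop :=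
  TransitionTo X π x x' ∧ TransitionTo X π x' x

/-- The transition class of `x` (within the fiber of `π x`). -/
def transClass (X : Set (ℤ → A)) (π : (ℤ → A) → ℤ → B) (x : ℤ → A) : Set (ℤ → A) :=
  {x' | x' ∈ X ∧ π x' = π x ∧ TransEquiv X π x x'}

/-- The set of transition classes over `y`. -/
def transClassesOver (X : Set (ℤ → A)) (π : (ℤ → A) → ℤ → B) (y : ℤ → B) :
    Set (Set (ℤ → A)) :=
  {C | ∃ x, x ∈ X ∧ π x = y ∧ C = transClass X π x}

/-- Right transitive point: its forward orbit is dense in `X`. -/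
def RightTransitive (X : Set (ℤ → A)) (x : ℤ → A) : Prop :=
  x ∈ X ∧ ∀ z ∈ X, ∀ N : ℕ, ∃ n : ℤ, 0 ≤ n ∧ ∀ m : ℤ, |m| ≤ (N : ℤ) → x (m + n) = z m

/-- Left transitive point: its backward orbit is dense in `X`. -/
def LeftTransitive (X : Set (ℤ → A)) (x : ℤ → A) : Prop :=
  x ∈ X ∧ ∀ z ∈ X, ∀ N : ℕ, ∃ n : ℤ, n ≤ 0 ∧ ∀ m : ℤ, |m| ≤ (N : ℤ) → x (m + n) = z m

/-- Doubly transitive point. -/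
def DoublyTransitive (X : Set (ℤ → A)) (x : ℤ → A) : Prop :=
  RightTransitive X x ∧ LeftTransitive X x

def MutuallySeparated (x x' : ℤ → A) : Prop := ∀ i : ℤ, x i ≠ x' i

def RightAsymptotic (x x' : ℤ → A) : Prop := ∃ N : ℤ, ∀ m : ℤ, N ≤ m → x m = x' m

def LeftAsymptotic (x x' : ℤ → A) : Prop := ∃ N : ℤ, ∀ m : ℤ, m ≤ N → x m = x' m

/-- The class degree: the minimal number of transition classes over points of `Y`. -/
noncomputable def classDegree (X : Set (ℤ → A)) (Y : Set (ℤ → B))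
    (π : (ℤ → A) → ℤ → B) : ℕ :=
  sInf {d | ∃ y ∈ Y, Nat.card (transClassesOver X π y) = d}

/-- The preimage blocks of a `Y`-block `w` under the one-block rule `Φ`. -/
def blockPre (X : Set (ℤ → A)) (Φ : A → B) {p : ℕ} (w : Fin p → B) : Set (Fin p → A) :=
  {u | OccursIn u X ∧ ∀ j, Φ (u j) = w j}

/-- `u ∈ π⁻¹(w)` is routable through `a` at time `n`. -/
def Routable (X : Set (ℤ → A)) (Φ : A → B) {p : ℕ} (w : Fin (p + 1) → B)
    (u : Fin (p + 1) → A) (n : Fin (p + 1)) (a : A) : Prop :=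
  ∃ u' ∈ blockPre X Φ w, u' 0 = u 0 ∧ u' (Fin.last p) = u (Fin.last p) ∧ u' n = a

/-- `(w, n, M)` is a transition block. -/
def IsTransBlock (X : Set (ℤ → A)) (Y : Set (ℤ → B)) (Φ : A → B) {p : ℕ}
    (w : Fin (p + 1) → B) (n : Fin (p + 1)) (M : Set A) : Prop :=
  OccursIn w Y ∧ 0 < n.1 ∧ n.1 < p ∧ (∀ a ∈ M, Φ a = w n) ∧
    ∀ u ∈ blockPre X Φ w, ∃ a ∈ M, Routable X Φ w u n a

/-- `c*_π`: the minimal depth of a transition block. -/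
noncomputable def minDepth (X : Set (ℤ → A)) (Y : Set (ℤ → B)) (Φ : A → B) : ℕ :=
  sInf {d | ∃ (p : ℕ) (w : Fin (p + 1) → B) (n : Fin (p + 1)) (M : Set A),
    IsTransBlock X Y Φ w n M ∧ Nat.card M = d}

/-- A minimal transition block. -/
def IsMinTransBlock (X : Set (ℤ → A)) (Y : Set (ℤ → B)) (Φ : A → B) {p : ℕ}
    (w : Fin (p + 1) → B) (n : Fin (p + 1)) (M : Set A) : Prop :=
  IsTransBlock X Y Φ w n M ∧ Nat.card M = minDepth X Y Φ

/-- `d(w)`: the minimal number of symbols seen at a single coordinate among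
the preimages of `w`. -/
noncomputable def dval (X : Set (ℤ → A)) (Φ : A → B) {p : ℕ} (w : Fin p → B) : ℕ :=
  sInf {m | ∃ k : Fin p, Nat.card {a : A | ∃ u ∈ blockPre X Φ w, u k = a} = m}

/-- A magic block: a block of `Y` minimizing `d(·)`. -/
def IsMagicBlock (X : Set (ℤ → A)) (Y : Set (ℤ → B)) (Φ : A → B) {p : ℕ}
    (w : Fin (p + 1) → B) : Prop :=
  OccursIn w Y ∧
    dval X Φ w = sInf {m | ∃ (q : ℕ) (v : Fin (q + 1) → B), OccursIn v Y ∧ dval X Φ v = m}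

/-- An `(X̄, v̄)`-diamond: blocks `u, v` of `X` with the same image, same
endpoints, `u` occurring in `X̄` and `v̄` a subblock of `v`. -/
def IsDiamond (X Xbar : Set (ℤ → A)) (Φ : A → B) {q p : ℕ} (vbar : Fin q → A)
    (u v : Fin (p + 1) → A) : Prop :=
  OccursIn u Xbar ∧ OccursIn v X ∧ (∀ j, Φ (u j) = Φ (v j)) ∧
    (∃ (s : ℕ) (_ : s + q ≤ p + 1), ∀ j : Fin q,
      v ⟨s + j.1, by have := j.2; omega⟩ = vbar j) ∧
    u 0 = v 0 ∧ u (Fin.last p) = v (Fin.last p)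

/-- Reversed transition `x →_r x'`. -/
def RevTransitionTo (X : Set (ℤ → A)) (π : (ℤ → A) → ℤ → B) (x x' : ℤ → A) : Prop :=
  ∀ n : ℤ, ∃ z ∈ X, π z = π x ∧ (∀ m : ℤ, n ≤ m → z m = x' m) ∧
    ∃ i : ℤ, i ≤ n ∧ ∀ m ≤ i, z m = x m

def RevTransEquiv (X : Set (ℤ → A)) (π : (ℤ → A) → ℤ → B) (x x' : ℤ → A) : Prop :=
  RevTransitionTo X π x x' ∧ RevTransitionTo X π x' x

/-- The reversed transition class of `x`. -/
def revClass (X : Set (ℤ → A)) (π : (ℤ → A) → ℤ → B) (x : ℤ → A) : Set (ℤ → A) :=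
  {x' | x' ∈ X ∧ π x' = π x ∧ RevTransEquiv X π x x'}

open scoped Classical in
/-- The standard metric on the full shift. -/
noncomputable def shiftDist (x x' : ℤ → A) : ℝ :=
  if x = x' then 0
  else
    let k : ℕ := sInf {k : ℕ | x (k : ℤ) ≠ x' (k : ℤ) ∨ x (-(k : ℤ)) ≠ x' (-(k : ℤ))}
    (2 : ℝ) ^ (-(k : ℤ))


section AuxSep

/-- Splice two points at coordinate `c`. -/
private def splice (c : ℤ) (ξ₁ ξ₂ : ℤ → A) : ℤ → A := fun m => if m ≤ c then ξ₁ m else ξ₂ m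

private lemma splice_left {c : ℤ} {ξ₁ ξ₂ : ℤ → A} {m : ℤ} (h : m ≤ c) :
    splice c ξ₁ ξ₂ m = ξ₁ m := if_pos h

private lemma splice_right {c : ℤ} {ξ₁ ξ₂ : ℤ → A} {m : ℤ} (h : c < m) :
    splice c ξ₁ ξ₂ m = ξ₂ m := if_neg (by omega)

private lemma splice_mem {X : Set (ℤ → A)} {T : A → A → Prop}
    (hXT : X = {x | ∀ i : ℤ, T (x i) (x (i + 1))})
    {ξ₁ ξ₂ : ℤ → A} (h1 : ξ₁ ∈ X) (h2 : ξ₂ ∈ X) {c : ℤ} (hj : ξ₁ c = ξ₂ c) :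
    splice c ξ₁ ξ₂ ∈ X := by
  rw [hXT] at h1 h2 ⊢
  intro i
  rcases lt_trichotomy i c with h | h | h
  · rw [splice_left (by omega : i ≤ c), splice_left (by omega : i + 1 ≤ c)]; exact h1 i
  · subst h
    rw [splice_left (le_refl i), splice_right (by omega : i < i + 1), hj]
    exact h2 i
  · rw [splice_right h, splice_right (by omega : c < i + 1)]; exact h2 i

private lemma shift_mem {X : Set (ℤ → A)} {T : A → A → Prop}
    (hXT : X = {x | ∀ i : ℤ, T (x i) (x (i + 1))})
    {ξ : ℤ → A} (h : ξ ∈ X) (n : ℤ) : shiftMap n ξ ∈ X := by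
  rw [hXT] at h ⊢
  intro i
  show T (ξ (i + n)) (ξ (i + 1 + n))
  rw [show i + 1 + n = (i + n) + 1 by ring]
  exact h (i + n)

/-- The set of symbols seen at coordinate `θ` among points of `X` whose image matches `w`
on the window `[a, b]`. -/
private def SymX (X : Set (ℤ → A)) (Φ : A → B) (w : ℤ → B) (a b θ : ℤ) : Set A :=
  {s | ∃ ξ, ξ ∈ X ∧ (∀ m, a ≤ m → m ≤ b → Φ (ξ m) = w m) ∧ ξ θ = s}


private lemma conv_lemma [TopologicalSpace A] [TopologicalSpace B]
    {X : Set (ℤ → A)} {Y : Set (ℤ → B)} {π : (ℤ → A) → ℤ → B}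
    {T : A → A → Prop} {Φ : A → B}
    (hXT : X = {x | ∀ i : ℤ, T (x i) (x (i + 1))})
    (hΦ : ∀ ξ i, π ξ i = Φ (ξ i))
    (hXirr : IrreducibleSubshift X)
    (hXY : ∀ ξ ∈ X, π ξ ∈ Y)
    (hfin : ∀ y' ∈ Y, {x | x ∈ X ∧ π x = y'}.Finite)
    {z z' : ℤ → A} (hz : z ∈ X) (hz' : z' ∈ X) (hπ : π z = π z')
    {p q r : ℤ} (hpr : p ≤ r) (hrq : r ≤ q)
    (hp : z p = z' p) (hq : z q = z' q) : z r = z' r := by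
  by_contra hne
  have hpr' : p < r := by
    rcases eq_or_lt_of_le hpr with h | h
    · exact absurd (h ▸ hp) hne
    · exact h
  have hrq' : r < q := by
    rcases eq_or_lt_of_le hrq with h | h
    · exact absurd (h ▸ hq) hne
    · exact h
  set n : ℕ := (q - p).toNat with hn
  have hnz : (n : ℤ) = q - p := Int.toNat_of_nonneg (by omega)
  have hocc : OccursIn (fun jj : Fin (n + 1) => z (p + (jj.1 : ℤ))) X := ⟨z, hz, p, fun _ => rfl⟩
  obtain ⟨ρ, hρ, i, k, hik, hρ1, hρ2⟩ := hXirr (n + 1) (n + 1) _ _ hocc hocc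
  set P : ℤ := k - i with hP
  have hPn : (n : ℤ) + 1 ≤ P := by
    have : i + ((n : ℕ) + 1 : ℕ) ≤ k := by exact_mod_cast hik
    push_cast at this; omega
  have hPpos : 0 < P := by omega
  have hρ1' : ∀ t : ℤ, 0 ≤ t → t ≤ (n : ℤ) → ρ (i + t) = z (p + t) := by
    intro t h1 h2
    have := hρ1 ⟨t.toNat, by omega⟩
    simpa [Int.toNat_of_nonneg h1] using this
  have hρ2' : ∀ t : ℤ, 0 ≤ t → t ≤ (n : ℤ) → ρ (k + t) = z (p + t) := by
    intro t h1 h2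
    have := hρ2 ⟨t.toNat, by omega⟩
    simpa [Int.toNat_of_nonneg h1] using this
  set ζ : ℤ → A := fun m => ρ (i + (m - i) % P) with hζ
  have hρT : ∀ m : ℤ, T (ρ m) (ρ (m + 1)) := by
    rw [hXT] at hρ; exact hρ
  have hemod : ∀ m : ℤ, 0 ≤ (m - i) % P ∧ (m - i) % P < P :=
    fun m => ⟨Int.emod_nonneg _ (by omega), Int.emod_lt_of_pos _ hPpos⟩
  have hζpat : ∀ (N : ℕ) (t : ℤ), 0 ≤ t → t ≤ (n : ℤ) → ζ (i + N * P + t) = z (p + t) := by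
    intro N t h1 h2
    have he : (i + N * P + t - i) % P = t := by
      rw [show i + N * P + t - i = t + P * N by ring, Int.add_mul_emod_self_left,
        Int.emod_eq_of_lt h1 (by omega)]
    show ρ (i + (i + N * P + t - i) % P) = z (p + t)
    rw [he]
    exact hρ1' t h1 h2
  have hζX : ζ ∈ X := by
    rw [hXT]
    intro m
    obtain ⟨ht0, htP⟩ := hemod m
    have hnext : (m + 1 - i) % P = ((m - i) % P + 1) % P := by
      rw [show m + 1 - i = (m - i) + 1 by ring, Int.add_emod,
        Int.emod_eq_of_lt (by norm_num) (by omega : (1:ℤ) < P)]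
    by_cases hc : (m - i) % P + 1 < P
    · have h2 : (m + 1 - i) % P = (m - i) % P + 1 := by
        rw [hnext, Int.emod_eq_of_lt (by omega) hc]
      show T (ρ (i + (m - i) % P)) (ρ (i + (m + 1 - i) % P))
      rw [h2, show i + ((m - i) % P + 1) = (i + (m - i) % P) + 1 by ring]
      exact hρT _
    · have h2 : (m + 1 - i) % P = 0 := by
        rw [hnext, show (m - i) % P + 1 = P by omega, Int.emod_self]
      show T (ρ (i + (m - i) % P)) (ρ (i + (m + 1 - i) % P))
      rw [h2, add_zero]
      have hik2 : ρ i = ρ k := by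
        have e1 := hρ1' 0 le_rfl (by omega)
        have e2 := hρ2' 0 le_rfl (by omega)
        rw [add_zero] at e1 e2
        rw [e1, e2]
      rw [show i + (m - i) % P = k - 1 by omega, hik2]
      have := hρT (k - 1)
      rwa [show k - 1 + 1 = k by ring] at this
  -- generic swapped point over a site base s
  set G : ℤ → (ℤ → A) := fun s m =>
    if s ≤ m ∧ m ≤ s + (n : ℤ) then z' (p + (m - s)) else ζ m with hG
  have hz'T : ∀ m : ℤ, T (z' m) (z' (m + 1)) := by
    rw [hXT] at hz'; exact hz'
  have hζT : ∀ m : ℤ, T (ζ m) (ζ (m + 1)) := by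
    rw [hXT] at hζX; exact hζX
  have hGin : ∀ (s m : ℤ), s ≤ m → m ≤ s + (n : ℤ) → G s m = z' (p + (m - s)) := by
    intro s m h1 h2; simp only [hG, if_pos (And.intro h1 h2)]
  have hGout : ∀ (s m : ℤ), ¬(s ≤ m ∧ m ≤ s + (n : ℤ)) → G s m = ζ m := by
    intro s m h1; simp only [hG, if_neg h1]
  have hGX : ∀ s : ℤ, (∀ t : ℤ, 0 ≤ t → t ≤ (n : ℤ) → ζ (s + t) = z (p + t)) →
      G s ∈ X := by
    intro s hpat
    rw [hXT]
    intro m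
    by_cases h1 : s ≤ m ∧ m ≤ s + (n : ℤ)
    · by_cases h2 : m + 1 ≤ s + (n : ℤ)
      · rw [hGin s m h1.1 h1.2, hGin s (m + 1) (by omega) h2,
          show p + (m + 1 - s) = (p + (m - s)) + 1 by ring]
        exact hz'T _
      · have hm : m = s + (n : ℤ) := by omega
        rw [hGin s m h1.1 h1.2, hGout s (m + 1) (by omega)]
        have e1 : z' (p + (m - s)) = ζ m := by
          have e2 := hpat (n : ℤ) (by omega) le_rfl
          rw [hm, show s + (n : ℤ) - s = (n : ℤ) by ring, show p + (n : ℤ) = q by omega, ← hq,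
            show q = p + (n : ℤ) by omega, e2]
        rw [e1]; exact hζT m
    · by_cases h2 : m + 1 = s
      · rw [hGout s m h1, hGin s (m + 1) (by omega) (by omega)]
        have e1 : z' (p + (m + 1 - s)) = ζ (m + 1) := by
          have e2 := hpat 0 le_rfl (by omega)
          rw [h2, show s - s = (0 : ℤ) by ring, add_zero, ← hp, add_zero] at *
          rw [h2, ← e2]
        rw [e1]; exact hζT m
      · rw [hGout s m h1, hGout s (m + 1) (by omega)]
        exact hζT m
  have hGπ : ∀ s : ℤ, (∀ t : ℤ, 0 ≤ t → t ≤ (n : ℤ) → ζ (s + t) = z (p + t)) →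
      π (G s) = π ζ := by
    intro s hpat
    funext m
    rw [hΦ, hΦ]
    by_cases h1 : s ≤ m ∧ m ≤ s + (n : ℤ)
    · rw [hGin s m h1.1 h1.2]
      have e1 : ζ m = z (p + (m - s)) := by
        have := hpat (m - s) (by omega) (by omega)
        rwa [show s + (m - s) = m by ring] at this
      rw [e1]
      have e2 := congrFun hπ (p + (m - s))
      rw [hΦ, hΦ] at e2
      exact e2.symm
    · rw [hGout s m h1]
  have hζpatN : ∀ N : ℕ, ∀ t : ℤ, 0 ≤ t → t ≤ (n : ℤ) → ζ (i + N * P + t) = z (p + t) :=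
    fun N => hζpat N
  have hFmem : ∀ N : ℕ, G (i + N * P) ∈ {x | x ∈ X ∧ π x = π ζ} := by
    intro N
    exact ⟨hGX _ (hζpatN N), hGπ _ (hζpatN N)⟩
  have hinj : Function.Injective (fun N : ℕ => G (i + N * P)) := by
    have key : ∀ N N' : ℕ, N < N' → G (i + N * P) ≠ G (i + N' * P) := by
      intro N N' hNN hEq
      set m0 : ℤ := i + N * P + (r - p) with hm0
      have e1 : G (i + N * P) m0 = z' r := by
        rw [hGin _ m0 (by linarith) (by linarith [hnz]),
          show p + (m0 - (i + N * P)) = r by rw [hm0]; ring]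
      have hlt : m0 < i + N' * P := by
        have h5 : ((N : ℤ) + 1) * P ≤ (N' : ℤ) * P := by
          have h6 : (N : ℤ) + 1 ≤ (N' : ℤ) := by exact_mod_cast hNN
          exact mul_le_mul_of_nonneg_right h6 hPpos.le
        have h7 : r - p < P := by omega
        calc m0 = i + N * P + (r - p) := hm0
        _ < i + N * P + P := by linarith
        _ = i + ((N : ℤ) + 1) * P := by ring
        _ ≤ i + N' * P := by linarith
      have e2 : G (i + N' * P) m0 = z r := by
        rw [hGout _ m0 (by rintro ⟨h8, -⟩; linarith)]
        have := hζpatN N (r - p) (by omega) (by omega)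
        rw [show p + (r - p) = r by ring] at this
        rw [hm0]
        exact this
      rw [hEq, e2] at e1
      exact hne e1
    intro N N' hEq
    by_contra hne'
    rcases lt_or_gt_of_ne hne' with h | h
    · exact key N N' h hEq
    · exact key N' N h hEq.symm
  have hinf := Set.infinite_of_injective_forall_mem hinj hFmem
  exact hinf ((hfin (π ζ) (hXY ζ hζX)))

end AuxSep

section AuxSep2

private lemma realize_lemma [Fintype A] [TopologicalSpace A] [DiscreteTopology A]
    {X : Set (ℤ → A)} (hXc : IsClosed X) {Φ : A → B} {y : ℤ → B} {t : ℤ} {s : A}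
    (h : ∀ n : ℕ, ∃ ξ, ξ ∈ X ∧ ξ t = s ∧ ∀ m, t - n ≤ m → m ≤ t + n → Φ (ξ m) = y m) :
    ∃ ξ, ξ ∈ X ∧ ξ t = s ∧ ∀ m, Φ (ξ m) = y m := by
  haveI : CompactSpace A := Finite.compactSpace
  set V : ℕ → Set (ℤ → A) := fun n =>
    {ξ | ξ ∈ X ∧ ξ t = s ∧ ∀ m, t - n ≤ m → m ≤ t + n → Φ (ξ m) = y m} with hV
  have hdec : ∀ n, V (n + 1) ⊆ V n := by
    rintro n ξ ⟨h1, h2, h3⟩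
    exact ⟨h1, h2, fun m hm1 hm2 => h3 m (by push_cast; omega) (by push_cast; omega)⟩
  have hne : ∀ n, (V n).Nonempty := fun n => h n
  have hcl : ∀ n, IsClosed (V n) := by
    intro n
    have : V n = (X ∩ (fun ξ : ℤ → A => ξ t) ⁻¹' {s}) ∩
        ⋂ (m : ℤ), ⋂ (_ : t - n ≤ m ∧ m ≤ t + n), (fun ξ : ℤ → A => ξ m) ⁻¹' {a | Φ a = y m} := by
      ext ξ
      simp only [hV, Set.mem_setOf_eq, Set.mem_inter_iff, Set.mem_preimage,
        Set.mem_singleton_iff, Set.mem_iInter]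
      constructor
      · rintro ⟨h1, h2, h3⟩
        exact ⟨⟨h1, h2⟩, fun m hm => h3 m hm.1 hm.2⟩
      · rintro ⟨⟨h1, h2⟩, h3⟩
        exact ⟨h1, h2, fun m hm1 hm2 => h3 m ⟨hm1, hm2⟩⟩
    rw [this]
    refine IsClosed.inter (IsClosed.inter hXc ?_) ?_
    · exact IsClosed.preimage (continuous_apply t) isClosed_singleton
    · exact isClosed_iInter fun m => isClosed_iInter fun _ =>
        IsClosed.preimage (continuous_apply m) (isClosed_discrete _)
  obtain ⟨ξ, hξ⟩ := IsCompact.nonempty_iInter_of_sequence_nonempty_isCompact_isClosed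
    V hdec hne ((hcl 0).isCompact) hcl
  simp only [Set.mem_iInter] at hξ
  refine ⟨ξ, (hξ 0).1, (hξ 0).2.1, fun m => ?_⟩
  exact (hξ (m - t).natAbs).2.2 m (by omega) (by omega)

end AuxSep2

theorem separated_or_rightAsymptotic_of_finite_to_one [Fintype A] [TopologicalSpace A] [DiscreteTopology A]
    [Fintype B] [TopologicalSpace B] [DiscreteTopology B]
    (X : Set (ℤ → A)) (Y : Set (ℤ → B)) (π : (ℤ → A) → ℤ → B)
    (hT : FactorTriple X Y π) (hXirr : IrreducibleSubshift X)
    (hX1 : IsOneStep X) (hπ1 : IsOneBlock π)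
    (hfin : ∀ y' ∈ Y, {x | x ∈ X ∧ π x = y'}.Finite)
    (y : ℤ → B) (hy : RightTransitive Y y)
    (x x' : ℤ → A) (hx : x ∈ X) (hx' : x' ∈ X)
    (hpx : π x = y) (hpx' : π x' = y) :
    MutuallySeparated x x' ∨ RightAsymptotic x x' := by
  obtain ⟨Φ, hΦ⟩ := hπ1
  obtain ⟨hXsub, T, hXT⟩ := hX1
  obtain ⟨hXsft, hYsub, hcode⟩ := hT
  obtain ⟨-, hXtoY, honto⟩ := hcode
  have hXclosed : IsClosed X := hXsub.1
  have hyY : y ∈ Y := hpx ▸ hXtoY x hx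
  by_contra hcon
  rw [not_or] at hcon
  obtain ⟨hnsep, hnra⟩ := hcon
  rw [MutuallySeparated] at hnsep
  push_neg at hnsep
  obtain ⟨i₀, hi₀⟩ := hnsep
  rw [RightAsymptotic] at hnra
  push_neg at hnra
  have hra : ∀ N : ℤ, ∃ m, N ≤ m ∧ x m ≠ x' m := fun N => hnra N
  -- the convexity of coincidence sets (uses no-diamond via conv_lemma)
  have CONV : ∀ z z' : ℤ → A, z ∈ X → z' ∈ X → π z = π z' →
      ∀ p q r : ℤ, p ≤ r → r ≤ q → z p = z' p → z q = z' q → z r = z' r :=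
    fun z z' hz hz' hπq p q r h1 h2 h3 h4 =>
      conv_lemma hXT hΦ hXirr hXtoY hfin hz hz' hπq h1 h2 h3 h4
  have hπxx' : π x = π x' := hpx.trans hpx'.symm
  -- the largest coincidence coordinate b'
  have hMbdd : ∃ b : ℤ, ∀ i : ℤ, x i = x' i → i ≤ b := by
    by_contra hnb
    push_neg at hnb
    obtain ⟨m₁, hm₁, hm₁ne⟩ := hra (i₀ + 1)
    obtain ⟨c₂, hc₂eq, hc₂gt⟩ := hnb m₁
    exact hm₁ne (CONV x x' hx hx' hπxx' i₀ c₂ m₁ (by omega) (by omega) hi₀ hc₂eq)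
  obtain ⟨b', hb'meet, hb'max⟩ :=
    Int.exists_greatest_of_bdd ⟨hMbdd.choose, fun i hi => hMbdd.choose_spec i hi⟩ ⟨i₀, hi₀⟩
  have hsplit : ∀ m, b' < m → x m ≠ x' m := fun m hm heq => by
    have := hb'max m heq; omega
  -- bound beyond which no two fiber points can meet and then separate
  have hGoodBound : ∃ C : ℤ, b' < C ∧ ∀ c, C ≤ c → ∀ z z' : ℤ → A, z ∈ X → π z = y →
      z' ∈ X → π z' = y → z c = z' c → ∀ m, c ≤ m → z m = z' m := by
    have hFibFin : {z : ℤ → A | z ∈ X ∧ π z = y}.Finite := hfin y hyY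
    set Fib := {z : ℤ → A | z ∈ X ∧ π z = y} with hFib
    have hbddEach : ∀ zp ∈ Fib ×ˢ Fib,
        BddAbove {c : ℤ | zp.1 c = zp.2 c ∧ ∃ m, c < m ∧ zp.1 m ≠ zp.2 m} := by
      intro zp hzp
      rw [Set.mem_prod] at hzp
      by_contra hnb
      rw [not_bddAbove_iff] at hnb
      obtain ⟨c₁, ⟨hc₁eq, m₁, hm₁, hm₁ne⟩, -⟩ := hnb 0
      obtain ⟨c₂, ⟨hc₂eq, -⟩, hc₂gt⟩ := hnb m₁
      exact hm₁ne (CONV zp.1 zp.2 hzp.1.1 hzp.2.1 (hzp.1.2.trans hzp.2.2.symm)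
        c₁ c₂ m₁ (by omega) (by omega) hc₁eq hc₂eq)
    have hBad : BddAbove {c : ℤ | ∃ zp ∈ Fib ×ˢ Fib,
        zp.1 c = zp.2 c ∧ ∃ m, c < m ∧ zp.1 m ≠ zp.2 m} := by
      refine BddAbove.mono ?_ (((hFibFin.prod hFibFin).bddAbove_biUnion).2 hbddEach)
      rintro c ⟨zp, hzp, h1, h2⟩
      exact Set.mem_biUnion hzp ⟨h1, h2⟩
    obtain ⟨CB, hCB⟩ := hBad
    refine ⟨max (CB + 1) (b' + 1), by omega, ?_⟩
    intro c hc z z' hzX hzy hz'X hz'y hmeet m hm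
    rcases eq_or_lt_of_le hm with h | h
    · rw [← h]; exact hmeet
    · by_contra hne
      have hcBad : c ∈ {c : ℤ | ∃ zp ∈ Fib ×ˢ Fib,
          zp.1 c = zp.2 c ∧ ∃ m, c < m ∧ zp.1 m ≠ zp.2 m} :=
        ⟨(z, z'), Set.mem_prod.2 ⟨⟨hzX, hzy⟩, ⟨hz'X, hz'y⟩⟩, hmeet, m, h, hne⟩
      have := hCB hcBad
      simp only [max_le_iff] at hc
      omega
  obtain ⟨C, hCb', hGood⟩ := hGoodBound
  -- magic configuration: minimize the number of symbols over a window
  set 𝒟 : Set ℕ := {n | ∃ w a b θ, w ∈ Y ∧ a ≤ θ ∧ θ ≤ b ∧ (SymX X Φ w a b θ).ncard = n}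
    with h𝒟
  have h𝒟ne : 𝒟.Nonempty :=
    ⟨(SymX X Φ y 0 0 0).ncard, y, 0, 0, 0, hyY, le_refl 0, le_refl 0, rfl⟩
  obtain ⟨ω, a0, b0, k0, hωY, hak, hkb, hcard⟩ := Nat.sInf_mem h𝒟ne
  set S := SymX X Φ ω a0 b0 k0 with hS
  have hdle : ∀ (w : ℤ → B) (a b θ : ℤ), w ∈ Y → a ≤ θ → θ ≤ b →
      sInf 𝒟 ≤ (SymX X Φ w a b θ).ncard :=
    fun w a b θ h1 h2 h3 => Nat.sInf_le ⟨w, a, b, θ, h1, h2, h3, rfl⟩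
  -- M1: stability of the symbol set at occurrences of the magic window
  have hM1 : ∀ (c A₁ B₁ : ℤ), (∀ m, a0 ≤ m → m ≤ b0 → y (m + c) = ω m) →
      A₁ ≤ a0 + c → b0 + c ≤ B₁ → SymX X Φ y A₁ B₁ (k0 + c) = S := by
    intro c A₁ B₁ hoc hA hB
    have hsub : SymX X Φ y A₁ B₁ (k0 + c) ⊆ S := by
      rintro s ⟨ξ, hξX, hmatch, hval⟩
      refine ⟨shiftMap c ξ, shift_mem hXT hξX c, fun m h1 h2 => ?_, hval⟩
      show Φ (ξ (m + c)) = ω m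
      rw [hmatch (m + c) (by omega) (by omega), hoc m h1 h2]
    exact Set.eq_of_subset_of_ncard_le hsub
      (hcard ▸ hdle y A₁ B₁ (k0 + c) hyY (by omega) (by omega)) (Set.toFinite S)
  -- far-right occurrences of windows of points of Y inside y
  have hOCC : ∀ z : ℤ → B, z ∈ Y → ∀ (N : ℕ) (M : ℤ), ∃ c, M ≤ c ∧
      ∀ m : ℤ, -(N : ℤ) ≤ m → m ≤ (N : ℤ) → y (m + c) = z m := by
    intro z hz N M
    have hz' : shiftMap (-(M + N)) z ∈ Y := hYsub.2 _ z hz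
    obtain ⟨n, hn0, hn⟩ := hy.2 _ hz' (N + (M + N).natAbs)
    refine ⟨n + (M + N), by omega, ?_⟩
    intro m h1 h2
    have h3 := hn (m + (M + N)) (by rw [abs_le]; omega)
    simp only [shiftMap] at h3
    rw [show m + (M + N) + -(M + N) = m by ring] at h3
    rw [show m + (n + (M + N)) = m + (M + N) + n by ring]
    exact h3
  -- first magic occurrence beyond max C b'
  obtain ⟨c₁, hc₁ge, hocc₁'⟩ := hOCC ω hωY (a0.natAbs + b0.natAbs) (max C b' + 1 - a0)
  have hocc₁ : ∀ m, a0 ≤ m → m ≤ b0 → y (m + c₁) = ω m := fun m h1 h2 =>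
    hocc₁' m (by omega) (by omega)
  have hT1b' : b' < a0 + c₁ := by omega
  have hT1C : C < a0 + c₁ := by omega
  set T₁ := k0 + c₁ with hT₁
  have hT₁b' : b' < T₁ := by omega
  have ha₁ne : x T₁ ≠ x' T₁ := hsplit T₁ (by omega)
  have hSy : SymX X Φ y (a0 + c₁) (b0 + c₁) T₁ = S := hM1 c₁ _ _ hocc₁ le_rfl le_rfl
  have hxy : ∀ m, Φ (x m) = y m := fun m => by rw [← hΦ x m, hpx]
  have hx'y : ∀ m, Φ (x' m) = y m := fun m => by rw [← hΦ x' m, hpx']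
  have ha₁S : x T₁ ∈ S := by
    rw [← hSy]; exact ⟨x, hx, fun m _ _ => hxy m, rfl⟩
  have ha₁'S : x' T₁ ∈ S := by
    rw [← hSy]; exact ⟨x', hx', fun m _ _ => hx'y m, rfl⟩
  -- a preimage of the magic point
  obtain ⟨ν, hνX, hνπ⟩ := honto ω hωY
  have hνy : ∀ m, Φ (ν m) = ω m := fun m => by rw [← hΦ ν m, hνπ]
  have hs₀S : ν k0 ∈ S := ⟨ν, hνX, fun m _ _ => hνy m, rfl⟩
  -- realization of stable symbols in the fiber of y at magic occurrences
  have hreal : ∀ c : ℤ, (∀ m, a0 ≤ m → m ≤ b0 → y (m + c) = ω m) → ∀ s ∈ S,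
      ∃ ξ, ξ ∈ X ∧ ξ (k0 + c) = s ∧ ∀ m, Φ (ξ m) = y m := by
    intro c hoc s hs
    apply realize_lemma hXclosed
    intro n
    have hwin : SymX X Φ y (min (a0 + c) (k0 + c - n)) (max (b0 + c) (k0 + c + n)) (k0 + c) = S :=
      hM1 c _ _ hoc (by omega) (by omega)
    rw [← hwin] at hs
    obtain ⟨ξ, h1, h2, h3⟩ := hs
    exact ⟨ξ, h1, h3, fun m hm1 hm2 => h2 m (by omega) (by omega)⟩
  -- glue a ν-window followed by the x-window from the coincidence point b' through T₁
  set Ln : ℕ := (b0 - a0).toNat with hLndef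
  set Lu : ℕ := (b0 + c₁ - b').toNat with hLudef
  have hLn : (Ln : ℤ) = b0 - a0 := Int.toNat_of_nonneg (by omega)
  have hLu : (Lu : ℤ) = b0 + c₁ - b' := Int.toNat_of_nonneg (by omega)
  obtain ⟨ρ, hρX, i, j, hij, hρν, hρu⟩ := hXirr (Ln + 1) (Lu + 1)
      (fun jj => ν (a0 + (jj.1 : ℤ))) (fun jj => x (b' + (jj.1 : ℤ)))
      ⟨ν, hνX, a0, fun _ => rfl⟩ ⟨x, hx, b', fun _ => rfl⟩
  have hij' : i + (Ln : ℤ) + 1 ≤ j := by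
    have : i + ((Ln + 1 : ℕ) : ℤ) ≤ j := hij
    push_cast at this; omega
  have hρν' : ∀ t : ℤ, 0 ≤ t → t ≤ (Ln : ℤ) → ρ (i + t) = ν (a0 + t) := by
    intro t h1 h2
    have := hρν ⟨t.toNat, by omega⟩
    simpa [Int.toNat_of_nonneg h1] using this
  have hρu' : ∀ t : ℤ, 0 ≤ t → t ≤ (Lu : ℤ) → ρ (j + t) = x (b' + t) := by
    intro t h1 h2
    have := hρu ⟨t.toNat, by omega⟩
    simpa [Int.toNat_of_nonneg h1] using this
  -- occurrence of the glued window far to the right in y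
  set Nsite : ℕ := i.natAbs + j.natAbs + Lu with hNsite
  obtain ⟨q, hqge, hsite'⟩ := hOCC (π ρ) (hXtoY ρ hρX) Nsite (C - i - (k0 - a0) + 1)
  have hsite : ∀ m : ℤ, i ≤ m → m ≤ j + (Lu : ℤ) → y (m + q) = Φ (ρ m) := by
    intro m h1 h2
    rw [hsite' m (by omega) (by omega), hΦ]
  set c₀ := q + i + (k0 - a0) with hc₀def
  set cc₁ := q + j + (T₁ - b') with hcc₁def
  have hc₀C : C ≤ c₀ := by omega
  have hc₀j : c₀ < q + j := by omega
  have hc₀₁ : c₀ < cc₁ := by omega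
  have hqjc₁ : q + j < cc₁ := by omega
  -- occurrence of the magic window at the ν-part of the site
  have hoccA : ∀ m, a0 ≤ m → m ≤ b0 → y (m + (q + i - a0)) = ω m := by
    intro m h1 h2
    have h3 := hsite (i + (m - a0)) (by omega) (by omega)
    rw [hρν' (m - a0) (by omega) (by omega), show a0 + (m - a0) = m by ring, hνy m] at h3
    rw [show m + (q + i - a0) = (i + (m - a0)) + q by ring]
    exact h3
  obtain ⟨z, hzX, hzval, hzy⟩ := hreal (q + i - a0) hoccA (ν k0) hs₀S
  have hzπ : π z = y := funext fun m => by rw [hΦ]; exact hzy m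
  have hzval' : z c₀ = ν k0 := by
    rw [show c₀ = k0 + (q + i - a0) by omega]; exact hzval
  -- occurrence of the magic window at the x-part of the site
  have hoccB : ∀ m, a0 ≤ m → m ≤ b0 → y (m + (q + j + c₁ - b')) = ω m := by
    intro m h1 h2
    have h3 := hsite (j + (m + c₁ - b')) (by omega) (by omega)
    rw [hρu' (m + c₁ - b') (by omega) (by omega), show b' + (m + c₁ - b') = m + c₁ by ring,
      hxy (m + c₁)] at h3
    rw [show m + (q + j + c₁ - b') = (j + (m + c₁ - b')) + q by ring]
    exact h3.trans (hocc₁ m h1 h2)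
  obtain ⟨z₁, hz₁X, hz₁val, hz₁y⟩ := hreal (q + j + c₁ - b') hoccB (x T₁) ha₁S
  obtain ⟨z₂, hz₂X, hz₂val, hz₂y⟩ := hreal (q + j + c₁ - b') hoccB (x' T₁) ha₁'S
  have hz₁val' : z₁ cc₁ = x T₁ := by
    rw [show cc₁ = k0 + (q + j + c₁ - b') by omega]; exact hz₁val
  have hz₂val' : z₂ cc₁ = x' T₁ := by
    rw [show cc₁ = k0 + (q + j + c₁ - b') by omega]; exact hz₂val
  -- first new fiber point: left part z, site pattern from ρ, right part z₁
  have hjunc1 : z c₀ = shiftMap (-q) ρ c₀ := by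
    show z c₀ = ρ (c₀ + -q)
    rw [show c₀ + -q = i + (k0 - a0) by omega, hρν' (k0 - a0) (by omega) (by omega),
      show a0 + (k0 - a0) = k0 by ring]
    exact hzval'
  have hW₁X : splice c₀ z (shiftMap (-q) ρ) ∈ X :=
    splice_mem hXT hzX (shift_mem hXT hρX (-q)) hjunc1
  have hW₁c₁ : splice c₀ z (shiftMap (-q) ρ) cc₁ = x T₁ := by
    rw [splice_right hc₀₁]
    show ρ (cc₁ + -q) = x T₁
    rw [show cc₁ + -q = j + (T₁ - b') by omega, hρu' (T₁ - b') (by omega) (by omega),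
      show b' + (T₁ - b') = T₁ by ring]
  have hZ₁X : splice cc₁ (splice c₀ z (shiftMap (-q) ρ)) z₁ ∈ X :=
    splice_mem hXT hW₁X hz₁X (hW₁c₁.trans hz₁val'.symm)
  have hZ₁y : ∀ m, Φ (splice cc₁ (splice c₀ z (shiftMap (-q) ρ)) z₁ m) = y m := by
    intro m
    by_cases h : m ≤ cc₁
    · rw [splice_left h]
      by_cases h2 : m ≤ c₀
      · rw [splice_left h2]; exact hzy m
      · rw [splice_right (by omega)]
        show Φ (ρ (m + -q)) = y m
        have h5 := hsite (m + -q) (by omega) (by omega)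
        rw [show (m + -q) + q = m by ring] at h5
        exact h5.symm
    · rw [splice_right (by omega)]; exact hz₁y m
  have hZ₁π : π (splice cc₁ (splice c₀ z (shiftMap (-q) ρ)) z₁) = y :=
    funext fun m => by rw [hΦ]; exact hZ₁y m
  -- second new fiber point: same left part, site pattern switching to the x' branch
  have hjunc2 : shiftMap (-q) ρ (q + j) = shiftMap (b' - (q + j)) x' (q + j) := by
    show ρ (q + j + -q) = x' (q + j + (b' - (q + j)))
    rw [show q + j + -q = j + 0 by ring, hρu' 0 le_rfl (by omega), add_zero,
      show q + j + (b' - (q + j)) = b' by ring]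
    exact hb'meet
  have hW₂X : splice (q + j) (shiftMap (-q) ρ) (shiftMap (b' - (q + j)) x') ∈ X :=
    splice_mem hXT (shift_mem hXT hρX (-q)) (shift_mem hXT hx' _) hjunc2
  have hjunc3 : z c₀ = splice (q + j) (shiftMap (-q) ρ) (shiftMap (b' - (q + j)) x') c₀ := by
    rw [splice_left (by omega)]; exact hjunc1
  have hW₃X : splice c₀ z (splice (q + j) (shiftMap (-q) ρ) (shiftMap (b' - (q + j)) x')) ∈ X :=
    splice_mem hXT hzX hW₂X hjunc3
  have hW₃c₁ : splice c₀ z (splice (q + j) (shiftMap (-q) ρ) (shiftMap (b' - (q + j)) x')) cc₁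
      = x' T₁ := by
    rw [splice_right hc₀₁, splice_right hqjc₁]
    show x' (cc₁ + (b' - (q + j))) = x' T₁
    rw [show cc₁ + (b' - (q + j)) = T₁ by omega]
  have hZ₂X : splice cc₁
      (splice c₀ z (splice (q + j) (shiftMap (-q) ρ) (shiftMap (b' - (q + j)) x'))) z₂ ∈ X :=
    splice_mem hXT hW₃X hz₂X (hW₃c₁.trans hz₂val'.symm)
  have hZ₂y : ∀ m, Φ (splice cc₁
      (splice c₀ z (splice (q + j) (shiftMap (-q) ρ) (shiftMap (b' - (q + j)) x'))) z₂ m) = y m := by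
    intro m
    by_cases h : m ≤ cc₁
    · rw [splice_left h]
      by_cases h2 : m ≤ c₀
      · rw [splice_left h2]; exact hzy m
      · rw [splice_right (by omega)]
        by_cases h3 : m ≤ q + j
        · rw [splice_left h3]
          show Φ (ρ (m + -q)) = y m
          have h5 := hsite (m + -q) (by omega) (by omega)
          rw [show (m + -q) + q = m by ring] at h5
          exact h5.symm
        · rw [splice_right (by omega)]
          show Φ (x' (m + (b' - (q + j)))) = y m
          have h5 := hsite (m + -q) (by omega) (by omega)
          rw [show (m + -q) + q = m by ring, show m + -q = j + (m + -q - j) by ring,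
            hρu' (m + -q - j) (by omega) (by omega), hxy] at h5
          rw [hx'y, show m + (b' - (q + j)) = b' + (m + -q - j) by ring]
          exact h5.symm
    · rw [splice_right (by omega)]; exact hz₂y m
  have hZ₂π : π (splice cc₁
      (splice c₀ z (splice (q + j) (shiftMap (-q) ρ) (shiftMap (b' - (q + j)) x'))) z₂) = y :=
    funext fun m => by rw [hΦ]; exact hZ₂y m
  -- the two new fiber points meet at c₀ but differ at cc₁ : contradiction with hGood
  have hmeet : splice cc₁ (splice c₀ z (shiftMap (-q) ρ)) z₁ c₀ =
      splice cc₁ (splice c₀ z (splice (q + j) (shiftMap (-q) ρ) (shiftMap (b' - (q + j)) x'))) z₂ c₀ := by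
    rw [splice_left (le_of_lt hc₀₁), splice_left (le_of_lt hc₀₁), splice_left le_rfl,
      splice_left le_rfl]
  have hfinal := hGood c₀ hc₀C _ _ hZ₁X hZ₁π hZ₂X hZ₂π hmeet cc₁ (le_of_lt hc₀₁)
  rw [splice_left le_rfl, splice_left le_rfl, hW₁c₁, hW₃c₁] at hfinal
  exact ha₁ne hfinal
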